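/- In a trinity, the equivalence classes of A_W = Z^{V∪E∪R}/≈_W containing an element of the form (x_V, 0, 0) form a subgroup isomorphic to Pic(D_V) ≅ Pic^0(D_V) × Z, where ≈_W is white-triangle equivalence. In particular, the classes containing an element (x_V, 0, 0) with deg(x_V) = 0 form a subgroup isomorphic to the sandpile group Pic^0(D_V). -/

import Mathlib

open Finset

/-- A combinatorial trinity: a triangulation of the sphere `S²` whose `0`-simplices are
properly three-colored by `V` (violet), `E` (emerald) and `R` (red).  It is encoded by
its sets `Tw` of white and `Tb` of black triangles, the color of each corner of each
triangle, and the three edge-gluing bijections `σR`, `σE`, `σV` matching each white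
triangle with the black triangle sharing its red (resp. emerald, violet) edge.  The
link conditions state that the triangles around each vertex form a single cycle, and
connectivity of the surface is required; the sphere (Euler) condition
`|V| + |E| + |R| = |Tw| + 2` appears as a hypothesis of the theorems. -/
structure Trinity (V E R Tw Tb : Type) where
  vw : Tw → V
  ew : Tw → E
  rW : Tw → R
  vb : Tb → V
  eb : Tb → E
  rb : Tb → R
  σR : Tw ≃ Tb
  σE : Tw ≃ Tb
  σV : Tw ≃ Tb
  σR_v : ∀ t, vb (σR t) = vw t
  σR_e : ∀ t, eb (σR t) = ew t
  σE_v : ∀ t, vb (σE t) = vw t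
  σE_r : ∀ t, rb (σE t) = rW t
  σV_e : ∀ t, eb (σV t) = ew t
  σV_r : ∀ t, rb (σV t) = rW t
  vsurj : Function.Surjective vw
  esurj : Function.Surjective ew
  rsurj : Function.Surjective rW
  linkV : ∀ t t' : Tw, vw t = vw t' →
    Relation.ReflTransGen (fun a b => σR a = σE b) t t'
  linkE : ∀ t t' : Tw, ew t = ew t' →
    Relation.ReflTransGen (fun a b => σR a = σV b) t t'
  linkR : ∀ t t' : Tw, rW t = rW t' →
    Relation.ReflTransGen (fun a b => σE a = σV b) t t'
  conn : ∀ t t' : Tw, Relation.ReflTransGen (fun a b =>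
    σR a = σE b ∨ σR a = σV b ∨ σE a = σR b ∨ σE a = σV b ∨ σV a = σR b ∨ σV a = σE b) t t'

namespace Trinity

variable {V E R Tw Tb : Type}

/-- The characteristic vector (in `ℤ^{V∪E∪R}`) of a white triangle. -/
def chi [DecidableEq V] [DecidableEq E] [DecidableEq R]
    (S : Trinity V E R Tw Tb) (t : Tw) : (V → ℤ) × (E → ℤ) × (R → ℤ) :=
  (fun v => if S.vw t = v then 1 else 0,
   fun e => if S.ew t = e then 1 else 0,
   fun r => if S.rW t = r then 1 else 0)

/-- The Laplacian of the balanced plane digraph `D_V` applied to `z : V → ℤ`: for each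
white triangle `t`, the corresponding edge of `D_V` points from the violet vertex of
the black triangle `σV t` to the violet vertex of `t` (they share their violet edge),
and firing moves one chip along each such edge. -/
def lapV [Fintype Tw] [DecidableEq V] (S : Trinity V E R Tw Tb) (z : V → ℤ) : V → ℤ :=
  fun u => ∑ t : Tw, z (S.vb (S.σV t)) *
    ((if S.vw t = u then 1 else 0) - (if S.vb (S.σV t) = u then 1 else 0))

/-- Linear equivalence of chip configurations on `D_V`. -/
def linEqV [Fintype Tw] [DecidableEq V] (S : Trinity V E R Tw Tb) (x y : V → ℤ) : Prop :=
  ∃ z : V → ℤ, y = x + S.lapV z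

/-- The Laplacian of the balanced plane digraph `D_E` applied to `z : E → ℤ`. -/
def lapE [Fintype Tw] [DecidableEq E] (S : Trinity V E R Tw Tb) (z : E → ℤ) : E → ℤ :=
  fun u => ∑ t : Tw, z (S.eb (S.σE t)) *
    ((if S.ew t = u then 1 else 0) - (if S.eb (S.σE t) = u then 1 else 0))

/-- Linear equivalence of chip configurations on `D_E`. -/
def linEqE [Fintype Tw] [DecidableEq E] (S : Trinity V E R Tw Tb) (x y : E → ℤ) : Prop :=
  ∃ z : E → ℤ, y = x + S.lapE z

/-- The red graph `G_R`: the bipartite graph on `V ∪ E` formed by the red edges (the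
support simple graph; each red edge lies in a unique white triangle). -/
def SR (S : Trinity V E R Tw Tb) : SimpleGraph (V ⊕ E) where
  Adj a b := ∃ t : Tw, (a = Sum.inl (S.vw t) ∧ b = Sum.inr (S.ew t)) ∨
    (b = Sum.inl (S.vw t) ∧ a = Sum.inr (S.ew t))
  symm := by
    constructor
    rintro a b ⟨t, h | h⟩
    exacts [⟨t, Or.inr h⟩, ⟨t, Or.inl h⟩]
  loopless := by
    constructor
    rintro a ⟨t, ⟨h1, h2⟩ | ⟨h1, h2⟩⟩ <;> subst h1 <;> simp at h2

/-- The violet graph `G_V`: the bipartite graph on `R ∪ E` formed by the violet edges. -/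
def SV (S : Trinity V E R Tw Tb) : SimpleGraph (R ⊕ E) where
  Adj a b := ∃ t : Tw, (a = Sum.inl (S.rW t) ∧ b = Sum.inr (S.ew t)) ∨
    (b = Sum.inl (S.rW t) ∧ a = Sum.inr (S.ew t))
  symm := by
    constructor
    rintro a b ⟨t, h | h⟩
    exacts [⟨t, Or.inr h⟩, ⟨t, Or.inl h⟩]
  loopless := by
    constructor
    rintro a ⟨t, ⟨h1, h2⟩ | ⟨h1, h2⟩⟩ <;> subst h1 <;> simp at h2

/-- `f : E → ℤ` is a hypertree of the red graph `G_R` on `E`. -/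
def hypertreeRE (S : Trinity V E R Tw Tb) (f : E → ℤ) : Prop :=
  ∃ T : SimpleGraph (V ⊕ E), T ≤ S.SR ∧ T.IsTree ∧
    ∀ e : E, ((T.neighborSet (Sum.inr e)).ncard : ℤ) = f e + 1

/-- `f : E → ℤ` is a hypertree of the violet graph `G_V` on `E`. -/
def hypertreeVE (S : Trinity V E R Tw Tb) (f : E → ℤ) : Prop :=
  ∃ T : SimpleGraph (R ⊕ E), T ≤ S.SV ∧ T.IsTree ∧
    ∀ e : E, ((T.neighborSet (Sum.inr e)).ncard : ℤ) = f e + 1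

/-- `f : V → ℤ` is a hypertree of the red graph `G_R` on `V`. -/
def hypertreeRV (S : Trinity V E R Tw Tb) (f : V → ℤ) : Prop :=
  ∃ T : SimpleGraph (V ⊕ E), T ≤ S.SR ∧ T.IsTree ∧
    ∀ v : V, ((T.neighborSet (Sum.inl v)).ncard : ℤ) = f v + 1

/-- The common degree `d(e) = d_{G_R}(e) = d_{G_V}(e)` of an emerald vertex, i.e. the
number of white triangles at `e`. -/
noncomputable def dE (S : Trinity V E R Tw Tb) (e : E) : ℤ := (({t : Tw | S.ew t = e}).ncard : ℤ)

end Trinity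

/-- The Laplacian of `D_V` as an additive homomorphism. -/
def Trinity.lapVHom {V E R Tw Tb : Type} [Fintype Tw] [DecidableEq V]
    (S : Trinity V E R Tw Tb) : (V → ℤ) →+ (V → ℤ) :=
  AddMonoidHom.mk' S.lapV (by
    intro a b
    funext u
    simp [Trinity.lapV, add_mul, Finset.sum_add_distrib])

/-- The degree homomorphism (sum of coordinates). -/
def degHom (V : Type) [Fintype V] : (V → ℤ) →+ ℤ :=
  AddMonoidHom.mk' (fun x => ∑ v, x v) (by
    intro a b
    simp [Finset.sum_add_distrib])

/-!
The class of `(x, 0, 0)` vanishes in `A_W` iff `x = ∑ c t • χ_V(t)` for some `c : Tw → ℤ`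
whose emerald and red fibre sums vanish, and these `c` are exactly the coboundaries
`t ↦ z (vw t) - z (tailV t)` of potentials `z` on `D_V`. Coboundaries have vanishing fibre sums
because rotating white triangles around their red (emerald) vertex carries heads of arcs to
tails. Conversely, over `ℚ` the coboundaries of the connected digraph `D_V` form a space of
dimension `|V| - 1`, which by Euler's formula is the dimension `|Tw| - (|R| + |E| - 1)` of the
cycle space of the connected violet graph on `R ⊕ E`; and rounding down a rational potential of
an integral coboundary gives an integral potential. Since the violet fibre sum of the
coboundary of `z` is `-L z`, the kernel of `x ↦ [(x, 0, 0)]` is the image of the Laplacian,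
and the three isomorphisms follow from the first isomorphism theorem and the splitting of the
degree map.
-/

open Matrix Module

section FiberSum

variable {ι κ μ α β : Type*} [Fintype ι] [DecidableEq κ]

def fiberSum [AddCommMonoid α] (f : ι → κ) (c : ι → α) (k : κ) : α :=
  ∑ i, if f i = k then c i else 0

section AddCommMonoid

variable [AddCommMonoid α] [AddCommMonoid β]

lemma fiberSum_comp_equiv (f : ι → κ) (π : ι ≃ ι) (c : ι → α) :
    fiberSum (f ∘ π) (c ∘ π) = fiberSum f c :=
  funext fun k => Equiv.sum_comp π fun i => if f i = k then c i else 0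

lemma fiberSum_comp [Fintype κ] [DecidableEq μ] (g : κ → μ) (f : ι → κ) (c : ι → α) :
    fiberSum (g ∘ f) c = fiberSum g (fiberSum f c) := by
  funext m
  calc ∑ i, (if g (f i) = m then c i else 0)
      = ∑ k, ∑ i, if f i = k then (if g k = m then c i else 0) else 0 := by
        rw [Finset.sum_comm]
        simp
    _ = fiberSum g (fiberSum f c) m := by
        refine Finset.sum_congr rfl fun k _ => ?_
        split_ifs <;> simp [fiberSum, *]

lemma fiberSum_zero (f : ι → κ) : fiberSum f (0 : ι → α) = 0 := by
  funext k
  simp [fiberSum]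

lemma map_fiberSum (φ : α →+ β) (f : ι → κ) (c : ι → α) :
    fiberSum f (φ ∘ c) = φ ∘ fiberSum f c := by
  funext k
  simp [fiberSum, map_sum, apply_ite φ]

lemma sum_fiberSum [Fintype κ] (f : ι → κ) (c : ι → α) : ∑ k, fiberSum f c k = ∑ i, c i := by
  simp [fiberSum, Finset.sum_comm (γ := κ)]

end AddCommMonoid

lemma fiberSum_sub [AddCommGroup α] (f : ι → κ) (a b : ι → α) :
    fiberSum f (a - b) = fiberSum f a - fiberSum f b := by
  funext k
  simp [fiberSum, ← Finset.sum_sub_distrib, ite_sub_ite]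

end FiberSum

section Incidence

variable {ι N K : Type*} [Field K]

lemma mem_span_one_of_forall_eq (p : N → K) (h : ∀ n m, p n = p m) :
    p ∈ K ∙ (1 : N → K) := by
  rcases isEmpty_or_nonempty N with hN | ⟨⟨n₀⟩⟩
  · rw [Subsingleton.elim p 0]
    exact zero_mem _
  · exact Submodule.mem_span_singleton.2 ⟨p n₀, funext fun n => by simp [h n₀ n]⟩

variable [DecidableEq N]

def incidenceMatrix (src dst : ι → N) : Matrix N ι K :=
  Matrix.of fun n i => (if dst i = n then 1 else 0) - (if src i = n then 1 else 0)

lemma incidenceMatrix_mulVec [Fintype ι] (src dst : ι → N) (c : ι → K) :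
    incidenceMatrix src dst *ᵥ c = fiberSum dst c - fiberSum src c := by
  funext n
  simp [incidenceMatrix, mulVec, dotProduct, fiberSum, sub_mul, Finset.sum_sub_distrib]

lemma incidenceMatrix_transpose_mulVec [Fintype N] (src dst : ι → N) (p : N → K) :
    (incidenceMatrix src dst)ᵀ *ᵥ p = fun i => p (dst i) - p (src i) := by
  funext i
  simp [incidenceMatrix, mulVec, dotProduct, sub_mul, Finset.sum_sub_distrib]

lemma card_le_rank_incidenceMatrix_add_one [Fintype ι] [Fintype N] (src dst : ι → N)
    (hconn : ∀ p : N → K, (∀ i, p (src i) = p (dst i)) → ∀ n m, p n = p m) :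
    Fintype.card N ≤ (incidenceMatrix (K := K) src dst).rank + 1 := by
  have hker : LinearMap.ker (incidenceMatrix (K := K) src dst)ᵀ.mulVecLin ≤ K ∙ 1 := by
    intro p hp
    refine mem_span_one_of_forall_eq p (hconn p fun i => ?_)
    have := congrFun (LinearMap.mem_ker.1 hp) i
    rw [mulVecLin_apply, incidenceMatrix_transpose_mulVec, Pi.zero_apply] at this
    exact (sub_eq_zero.1 this).symm
  have hker_le : finrank K (LinearMap.ker (incidenceMatrix (K := K) src dst)ᵀ.mulVecLin) ≤ 1 :=
    (Submodule.finrank_mono hker).trans ((finrank_span_le_card _).trans (by simp))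
  have hrn := LinearMap.finrank_range_add_finrank_ker (K := K)
    (incidenceMatrix (K := K) src dst)ᵀ.mulVecLin
  rw [finrank_fintype_fun_eq_card] at hrn
  rw [← rank_transpose]
  unfold Matrix.rank
  omega

end Incidence

section AddGroups

open QuotientAddGroup

noncomputable def AddSubgroup.mapEquivMapOfKerEq {G H₁ H₂ : Type*} [AddGroup G] [AddGroup H₁]
    [AddGroup H₂] {f₁ : G →+ H₁} {f₂ : G →+ H₂} (h : f₁.ker = f₂.ker) (K : AddSubgroup G) :
    K.map f₁ ≃+ K.map f₂ :=
  have hker : (f₁.comp K.subtype).ker = (f₂.comp K.subtype).ker := by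
    rw [← AddMonoidHom.comap_ker, ← AddMonoidHom.comap_ker, h]
  have hrange₁ : (f₁.comp K.subtype).range = K.map f₁ := by
    rw [AddMonoidHom.range_comp, AddSubgroup.range_subtype]
  have hrange₂ : (f₂.comp K.subtype).range = K.map f₂ := by
    rw [AddMonoidHom.range_comp, AddSubgroup.range_subtype]
  (AddEquiv.addSubgroupCongr hrange₁).symm.trans <|
    (quotientKerEquivRange _).symm.trans <|
      (quotientAddEquivOfEq hker).trans <|
        (quotientKerEquivRange _).trans (AddEquiv.addSubgroupCongr hrange₂)

def AddMonoidHom.equivKerProdInt {A : Type*} [AddCommGroup A] (d : A →+ ℤ) (a : A)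
    (ha : d a = 1) : A ≃+ d.ker × ℤ where
  toFun x := (⟨x - d x • a, by simp [ha]⟩, d x)
  invFun p := p.1 + p.2 • a
  left_inv x := by simp
  right_inv := by
    rintro ⟨⟨y, hy⟩, n⟩
    have hd : d (y + n • a) = n := by simp [AddMonoidHom.mem_ker.1 hy, ha]
    ext <;> simp [hd]
  map_add' x y := by
    ext <;> simp [add_zsmul]
    abel

def QuotientAddGroup.equivMapKerProdInt {G : Type*} [AddCommGroup G] {Λ : AddSubgroup G}
    {d : G →+ ℤ} (hΛ : Λ ≤ d.ker) {a : G} (ha : d a = 1) :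
    G ⧸ Λ ≃+ (d.ker.map (mk' Λ)) × ℤ :=
  ((lift Λ d hΛ).equivKerProdInt a ha).trans <|
    AddEquiv.prodCongr (AddEquiv.addSubgroupCongr (ker_lift _ _ hΛ)) (AddEquiv.refl ℤ)

end AddGroups

namespace Trinity

variable {V E R Tw Tb : Type}

lemma nonempty_of_card_eq (S : Trinity V E R Tw Tb) [Fintype V] [Fintype E] [Fintype R]
    [Fintype Tw]
    (heuler : Fintype.card V + Fintype.card E + Fintype.card R = Fintype.card Tw + 2) :
    Nonempty V := by
  by_contra hV
  rw [not_nonempty_iff] at hV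
  have := Function.isEmpty S.vw
  have := S.esurj.isEmpty
  have := S.rsurj.isEmpty
  simp [Fintype.card_eq_zero] at heuler

variable (S : Trinity V E R Tw Tb)

lemma eq_of_forall_sigma_eq {β : Type*} (g : Tw → β) (h : Tb → β)
    (hR : ∀ t, h (S.σR t) = g t) (hE : ∀ t, h (S.σE t) = g t) (hV : ∀ t, h (S.σV t) = g t)
    (t t' : Tw) : g t = g t' := by
  induction S.conn t t' with
  | refl => rfl
  | tail _ hbc ih =>
    refine ih.trans ?_
    rcases hbc with h' | h' | h' | h' | h' | h'
    · rw [← hR, h', hE]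
    · rw [← hR, h', hV]
    · rw [← hE, h', hR]
    · rw [← hE, h', hV]
    · rw [← hV, h', hR]
    · rw [← hV, h', hE]

def tailV (t : Tw) : V := S.vb (S.σV t)

lemma eq_of_forall_tailV_eq {β : Type*} (p : V → β) (hp : ∀ t, p (S.tailV t) = p (S.vw t))
    (u w : V) : p u = p w := by
  obtain ⟨t, rfl⟩ := S.vsurj u
  obtain ⟨t', rfl⟩ := S.vsurj w
  exact S.eq_of_forall_sigma_eq (p ∘ S.vw) (p ∘ S.vb) (fun t => congrArg p (S.σR_v t))
    (fun t => congrArg p (S.σE_v t)) hp t t'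

lemma eq_of_forall_violet_edge {β : Type*} (p : R ⊕ E → β)
    (hp : ∀ t, p (.inr (S.ew t)) = p (.inl (S.rW t))) (n m : R ⊕ E) : p n = p m := by
  have hblack (s : Tb) : p (.inr (S.eb s)) = p (.inl (S.rb s)) := by
    have := hp (S.σV.symm s)
    rwa [← S.σV_e, ← S.σV_r, Equiv.apply_symm_apply] at this
  have hred (t t' : Tw) : p (.inl (S.rW t)) = p (.inl (S.rW t')) :=
    S.eq_of_forall_sigma_eq (fun t => p (.inl (S.rW t))) (fun s => p (.inl (S.rb s)))
      (fun t => by rw [← hblack, S.σR_e, hp]) (fun t => by rw [S.σE_r]) (fun t => by rw [S.σV_r])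
      t t'
  have hbase (n : R ⊕ E) : ∃ t, p n = p (.inl (S.rW t)) := by
    rcases n with r | e
    · obtain ⟨t, rfl⟩ := S.rsurj r
      exact ⟨t, rfl⟩
    · obtain ⟨t, rfl⟩ := S.esurj e
      exact ⟨t, hp t⟩
  obtain ⟨t, ht⟩ := hbase n
  obtain ⟨t', ht'⟩ := hbase m
  rw [ht, ht', hred]

def rotR : Tw ≃ Tw := S.σE.trans S.σV.symm

def rotE : Tw ≃ Tw := S.σR.trans S.σV.symm

lemma tailV_rotR (t : Tw) : S.tailV (S.rotR t) = S.vw t := by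
  simp [tailV, rotR, S.σE_v]

lemma rW_rotR (t : Tw) : S.rW (S.rotR t) = S.rW t := by
  simp [rotR, ← S.σV_r, S.σE_r]

lemma tailV_rotE (t : Tw) : S.tailV (S.rotE t) = S.vw t := by
  simp [tailV, rotE, S.σR_v]

lemma ew_rotE (t : Tw) : S.ew (S.rotE t) = S.ew t := by
  simp [rotE, ← S.σV_e, S.σR_e]

def coboundaryV {α : Type*} [AddCommGroup α] (z : V → α) : Tw → α := z ∘ S.vw - z ∘ S.tailV

section Fibers

variable [Fintype Tw]

lemma fiberSum_comp_tailV {κ α : Type*} [DecidableEq κ] [AddCommMonoid α] {f g : Tw → κ}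
    (π : Tw ≃ Tw) (hf : ∀ t, f (π t) = g t) (hπ : ∀ t, S.tailV (π t) = S.vw t) (z : V → α) :
    fiberSum f (z ∘ S.tailV) = fiberSum g (z ∘ S.vw) := by
  rw [← fiberSum_comp_equiv f π]
  congr 1 <;> funext t <;> simp [hf, hπ]

variable {α : Type*} [AddCommGroup α]

lemma fiberSum_rW_coboundaryV [DecidableEq R] (z : V → α) :
    fiberSum S.rW (S.coboundaryV z) = 0 := by
  rw [coboundaryV, fiberSum_sub, S.fiberSum_comp_tailV S.rotR S.rW_rotR S.tailV_rotR, sub_self]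

lemma fiberSum_ew_coboundaryV [DecidableEq E] (z : V → α) :
    fiberSum S.ew (S.coboundaryV z) = 0 := by
  rw [coboundaryV, fiberSum_sub, S.fiberSum_comp_tailV S.rotE S.ew_rotE S.tailV_rotE, sub_self]

lemma lapV_eq_fiberSum [DecidableEq V] (z : V → ℤ) :
    S.lapV z = fiberSum S.vw (z ∘ S.tailV) - fiberSum S.tailV (z ∘ S.tailV) := by
  funext u
  simp [lapV, fiberSum, tailV, mul_sub, Finset.sum_sub_distrib]
  rfl

lemma fiberSum_vw_coboundaryV [DecidableEq V] (z : V → ℤ) :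
    fiberSum S.vw (S.coboundaryV z) = -S.lapV z := by
  rw [coboundaryV, fiberSum_sub, lapV_eq_fiberSum,
    S.fiberSum_comp_tailV S.rotR S.tailV_rotR S.tailV_rotR, neg_sub]

end Fibers

lemma coboundaryV_eq_transpose_mulVec [Fintype V] [DecidableEq V] {K : Type*} [Field K]
    (z : V → K) : S.coboundaryV z = (incidenceMatrix S.tailV S.vw)ᵀ *ᵥ z := by
  rw [incidenceMatrix_transpose_mulVec]
  rfl

lemma incidenceMatrix_violet_mulVec_eq_zero [Fintype E] [Fintype R] [Fintype Tw]
    [DecidableEq E] [DecidableEq R] {K : Type*} [Field K] {c : Tw → K}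
    (hR : fiberSum S.rW c = 0) (hE : fiberSum S.ew c = 0) :
    incidenceMatrix (Sum.inr ∘ S.ew) (Sum.inl ∘ S.rW) *ᵥ c = 0 := by
  rw [incidenceMatrix_mulVec, fiberSum_comp, fiberSum_comp, hR, hE, fiberSum_zero, fiberSum_zero,
    sub_zero]

lemma sum_zsmul_chi [Fintype Tw] [DecidableEq V] [DecidableEq E] [DecidableEq R] (c : Tw → ℤ) :
    ∑ t, c t • S.chi t = (fiberSum S.vw c, fiberSum S.ew c, fiberSum S.rW c) := by
  ext <;> simp [chi, fiberSum, Prod.fst_sum, Prod.snd_sum, Finset.sum_apply]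

lemma range_lapVHom_le_ker_degHom [Fintype V] [Fintype Tw] [DecidableEq V] :
    S.lapVHom.range ≤ (degHom V).ker := by
  rintro _ ⟨z, rfl⟩
  change ∑ u, S.lapV z u = 0
  simp only [lapV_eq_fiberSum, Pi.sub_apply, Finset.sum_sub_distrib, sum_fiberSum, sub_self]

variable [Fintype V] [Fintype E] [Fintype R] [Fintype Tw]
  [DecidableEq V] [DecidableEq E] [DecidableEq R]

lemma exists_coboundaryV_eq {K : Type*} [Field K]
    (heuler : Fintype.card V + Fintype.card E + Fintype.card R = Fintype.card Tw + 2)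
    (c : Tw → K) (hR : fiberSum S.rW c = 0) (hE : fiberSum S.ew c = 0) :
    ∃ z : V → K, S.coboundaryV z = c := by
  set A : Matrix V Tw K := incidenceMatrix S.tailV S.vw
  set B : Matrix (R ⊕ E) Tw K := incidenceMatrix (Sum.inr ∘ S.ew) (Sum.inl ∘ S.rW)
  have hle : LinearMap.range Aᵀ.mulVecLin ≤ LinearMap.ker B.mulVecLin := by
    rintro _ ⟨z, rfl⟩
    rw [LinearMap.mem_ker, mulVecLin_apply, mulVecLin_apply, ← coboundaryV_eq_transpose_mulVec]
    exact S.incidenceMatrix_violet_mulVec_eq_zero (S.fiberSum_rW_coboundaryV z)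
      (S.fiberSum_ew_coboundaryV z)
  have hA : Fintype.card V ≤ A.rank + 1 :=
    card_le_rank_incidenceMatrix_add_one _ _ S.eq_of_forall_tailV_eq
  have hB : Fintype.card (R ⊕ E) ≤ B.rank + 1 :=
    card_le_rank_incidenceMatrix_add_one _ _ S.eq_of_forall_violet_edge
  have hrnB := LinearMap.finrank_range_add_finrank_ker B.mulVecLin
  rw [Module.finrank_fintype_fun_eq_card] at hrnB
  rw [Fintype.card_sum] at hB
  rw [← rank_transpose] at hA
  have heq : LinearMap.range Aᵀ.mulVecLin = LinearMap.ker B.mulVecLin :=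
    Submodule.eq_of_le_of_finrank_le hle (by unfold Matrix.rank at hA hB; omega)
  have hc : c ∈ LinearMap.range Aᵀ.mulVecLin :=
    heq ▸ LinearMap.mem_ker.2 (S.incidenceMatrix_violet_mulVec_eq_zero hR hE)
  obtain ⟨z, hz⟩ := hc
  exact ⟨z, (S.coboundaryV_eq_transpose_mulVec z).trans hz⟩

lemma exists_int_coboundaryV_eq
    (heuler : Fintype.card V + Fintype.card E + Fintype.card R = Fintype.card Tw + 2)
    (c : Tw → ℤ) (hR : fiberSum S.rW c = 0) (hE : fiberSum S.ew c = 0) :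
    ∃ z : V → ℤ, S.coboundaryV z = c := by
  obtain ⟨z, hz⟩ := S.exists_coboundaryV_eq heuler (Int.castAddHom ℚ ∘ c)
    (by rw [map_fiberSum, hR]; rfl) (by rw [map_fiberSum, hE]; rfl)
  refine ⟨fun v => ⌊z v⌋, funext fun t => ?_⟩
  have ht : z (S.vw t) = z (S.tailV t) + c t := by
    have := congrFun hz t
    simp only [coboundaryV, Pi.sub_apply, Function.comp_apply, Int.coe_castAddHom] at this
    linarith
  simp [coboundaryV, ht, Int.floor_add_intCast]

lemma inl_mem_closure_range_chi_iff
    (heuler : Fintype.card V + Fintype.card E + Fintype.card R = Fintype.card Tw + 2)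
    (x : V → ℤ) : (x, 0) ∈ AddSubgroup.closure (Set.range S.chi) ↔ x ∈ S.lapVHom.range := by
  rw [AddSubgroup.mem_closure_range_iff_of_fintype]
  constructor
  · rintro ⟨c, hc⟩
    rw [sum_zsmul_chi, Prod.mk.injEq, Prod.zero_eq_mk, Prod.mk.injEq] at hc
    obtain ⟨rfl, hE, hR⟩ := hc
    obtain ⟨z, rfl⟩ := S.exists_int_coboundaryV_eq heuler _ hR.symm hE.symm
    exact ⟨-z, by rw [map_neg, fiberSum_vw_coboundaryV]; rfl⟩
  · rintro ⟨z, rfl⟩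
    refine ⟨S.coboundaryV (-z), ?_⟩
    rw [sum_zsmul_chi, fiberSum_vw_coboundaryV, fiberSum_ew_coboundaryV, fiberSum_rW_coboundaryV,
      ← neg_neg (S.lapVHom z), ← map_neg]
    rfl

end Trinity

/-- in the trinity sandpile group `A_W = ℤ^{V∪E∪R}/≈_W`, the classes
containing an element of the form `(x_V, 0, 0)` form a subgroup isomorphic to
`Pic(D_V) ≅ Pic⁰(D_V) × ℤ`; in particular the classes containing an element
`(x_V, 0, 0)` with `deg x_V = 0` form a subgroup isomorphic to `Pic⁰(D_V)`. -/
theorem trinity_sandpile_subgroup_iso_pic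
    {V E R Tw Tb : Type} [Fintype V] [Fintype E] [Fintype R] [Fintype Tw]
    [DecidableEq V] [DecidableEq E] [DecidableEq R]
    (S : Trinity V E R Tw Tb)
    (heuler : Fintype.card V + Fintype.card E + Fintype.card R = Fintype.card Tw + 2) :
    let Wsub : AddSubgroup ((V → ℤ) × (E → ℤ) × (R → ℤ)) :=
      AddSubgroup.closure (Set.range S.chi)
    let ι : (V → ℤ) →+ ((V → ℤ) × (E → ℤ) × (R → ℤ)) ⧸ Wsub :=
      (QuotientAddGroup.mk' Wsub).comp (AddMonoidHom.inl (V → ℤ) ((E → ℤ) × (R → ℤ)))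
    let Λ : AddSubgroup (V → ℤ) := S.lapVHom.range
    let Pic0 : AddSubgroup ((V → ℤ) ⧸ Λ) :=
      AddSubgroup.map (QuotientAddGroup.mk' Λ) (degHom V).ker
    Nonempty (ι.range ≃+ ((V → ℤ) ⧸ Λ)) ∧
    Nonempty (ι.range ≃+ (Pic0 × ℤ)) ∧
    Nonempty ((AddSubgroup.map ι (degHom V).ker) ≃+ Pic0) := by
  intro Wsub ι Λ Pic0
  have hker : ι.ker = Λ := AddSubgroup.ext fun x =>
    (QuotientAddGroup.eq_zero_iff _).trans (S.inl_mem_closure_range_chi_iff heuler x)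
  obtain ⟨v⟩ := S.nonempty_of_card_eq heuler
  have hdeg : degHom V (Pi.single v 1) = 1 := by simp [degHom]
  let e : ι.range ≃+ (V → ℤ) ⧸ Λ :=
    (QuotientAddGroup.quotientKerEquivRange ι).symm.trans
      (QuotientAddGroup.quotientAddEquivOfEq hker)
  exact ⟨⟨e⟩, ⟨e.trans (QuotientAddGroup.equivMapKerProdInt S.range_lapVHom_le_ker_degHom hdeg)⟩,
    ⟨AddSubgroup.mapEquivMapOfKerEq (hker.trans (QuotientAddGroup.ker_mk' Λ).symm) _⟩⟩
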